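/- Let τ : (C, E, s) → (C', E', s') be an extriangulated functor between extriangulated categories such that C is Frobenius with finite-dimensional Hom-spaces and extriangulated 2-Calabi–Yau. Suppose there are cluster tilting objects T ∈ C and T' ∈ C' with τ(T) = T', that τ induces an isomorphism Hom_C(T,T) → Hom_{C'}(T',T'), and that τ is essentially surjective. Then τ is an equivalence of extriangulated categories; in particular τ is fully faithful on Hom-spaces and induces isomorphisms E(X,Y) → E'(τX, τY) for all X, Y. -/

import Mathlib

/-!
STATEMENT 9: Let τ : (C, E, s) → (C', E', s') be an extriangulated functor between
extriangulated categories such that C is Frobenius with finite-dimensional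
Hom-spaces and extriangulated 2-Calabi–Yau.  Suppose there are cluster tilting
objects T ∈ C and T' ∈ C' with τ(T) ≅ T', that τ induces an isomorphism
Hom_C(T,T) → Hom_{C'}(T',T'), and that τ is essentially surjective.  Then τ is an
equivalence of extriangulated categories: it is fully faithful and induces
isomorphisms E(X,Y) → E'(τX, τY) for all X, Y.
-/

open CategoryTheory Limits Opposite

universe v u w

variable (k : Type) [Field k]

/-- A (k-linear) extriangulated category structure in the sense of Nakaoka–Palu on a
preadditive k-linear category `C`: a biadditive extension functor `E`, a realization
relation `realizes α f g` expressing that the conflation `A → B → Z` realizes the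
extension `α ∈ E(Z, A)`, together with the axioms used in this paper: existence of
realizations, split = zero, and the long exact `Hom`–`E` sequences associated to a
conflation (Nakaoka–Palu; Gorsky–Nakaoka–Palu Thm 3.5). -/
structure Extriangulated (C : Type u) [Category.{v} C] [Preadditive C]
    [CategoryTheory.Linear k C] where
  E : Cᵒᵖ ⥤ C ⥤ ModuleCat.{w} k
  realizes : ∀ {A Z : C}, ((E.obj (op Z)).obj A) → ∀ {B : C}, (A ⟶ B) → (B ⟶ Z) → Prop
  realize_exists : ∀ {A Z : C} (α : (E.obj (op Z)).obj A),
    ∃ (B : C) (f : A ⟶ B) (g : B ⟶ Z), realizes α f g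
  comp_zero : ∀ {A Z B : C} (α : (E.obj (op Z)).obj A) (f : A ⟶ B) (g : B ⟶ Z),
    realizes α f g → f ≫ g = 0
  realizes_zero : ∀ {A Z B : C} (f : A ⟶ B) (g : B ⟶ Z),
    realizes (0 : (E.obj (op Z)).obj A) f g →
      (∃ r : B ⟶ A, f ≫ r = 𝟙 A) ∧ (∃ s : Z ⟶ B, s ≫ g = 𝟙 Z)
  split_zero : ∀ {A Z B : C} (α : (E.obj (op Z)).obj A) (f : A ⟶ B) (g : B ⟶ Z),
    realizes α f g → (∃ r : B ⟶ A, f ≫ r = 𝟙 A) → α = 0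
  ex₁ : ∀ {A Z B T : C} (α : (E.obj (op Z)).obj A) (f : A ⟶ B) (g : B ⟶ Z),
    realizes α f g → ∀ (h : T ⟶ B), h ≫ g = 0 → ∃ h' : T ⟶ A, h' ≫ f = h
  ex₂ : ∀ {A Z B T : C} (α : (E.obj (op Z)).obj A) (f : A ⟶ B) (g : B ⟶ Z),
    realizes α f g → ∀ (h : T ⟶ Z), ((E.map h.op).app A) α = 0 → ∃ h' : T ⟶ B, h' ≫ g = h
  ex₂' : ∀ {A Z B T : C} (α : (E.obj (op Z)).obj A) (f : A ⟶ B) (g : B ⟶ Z),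
    realizes α f g → ∀ (h' : T ⟶ B), ((E.map (h' ≫ g).op).app A) α = 0
  ex₃ : ∀ {A Z B T : C} (α : (E.obj (op Z)).obj A) (f : A ⟶ B) (g : B ⟶ Z),
    realizes α f g → ∀ (β : (E.obj (op T)).obj A), ((E.obj (op T)).map f) β = 0 →
      ∃ h : T ⟶ Z, ((E.map h.op).app A) α = β
  ex₃' : ∀ {A Z B T : C} (α : (E.obj (op Z)).obj A) (f : A ⟶ B) (g : B ⟶ Z),
    realizes α f g → ∀ (h : T ⟶ Z), ((E.obj (op T)).map f) (((E.map h.op).app A) α) = 0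
  ex₄ : ∀ {A Z B T : C} (α : (E.obj (op Z)).obj A) (f : A ⟶ B) (g : B ⟶ Z),
    realizes α f g → ∀ (h : B ⟶ T), f ≫ h = 0 → ∃ h' : Z ⟶ T, g ≫ h' = h
  ex₅ : ∀ {A Z B T : C} (α : (E.obj (op Z)).obj A) (f : A ⟶ B) (g : B ⟶ Z),
    realizes α f g → ∀ (h : A ⟶ T), ((E.obj (op Z)).map h) α = 0 → ∃ h' : B ⟶ T, f ≫ h' = h
  ex₅' : ∀ {A Z B T : C} (α : (E.obj (op Z)).obj A) (f : A ⟶ B) (g : B ⟶ Z),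
    realizes α f g → ∀ (h' : B ⟶ T), ((E.obj (op Z)).map (f ≫ h')) α = 0
  ex₆ : ∀ {A Z B T : C} (α : (E.obj (op Z)).obj A) (f : A ⟶ B) (g : B ⟶ Z),
    realizes α f g → ∀ (β : (E.obj (op Z)).obj T), ((E.map g.op).app T) β = 0 →
      ∃ h : A ⟶ T, ((E.obj (op Z)).map h) α = β
  ex₆' : ∀ {A Z B T : C} (α : (E.obj (op Z)).obj A) (f : A ⟶ B) (g : B ⟶ Z),
    realizes α f g → ∀ (h : A ⟶ T), ((E.map g.op).app T) (((E.obj (op Z)).map h) α) = 0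

namespace Extriangulated

variable {k} {C : Type u} [Category.{v} C] [Preadditive C] [CategoryTheory.Linear k C]
  [HasFiniteBiproducts C]

/-- `(f, g)` is a conflation: it realizes some extension class. -/
def Conflation (σ : Extriangulated k C) {A B Z : C} (f : A ⟶ B) (g : B ⟶ Z) : Prop :=
  ∃ α, σ.realizes α f g

/-- `P` is projective: `E(P, X) = 0` for all `X`. -/
def Projective (σ : Extriangulated k C) (P : C) : Prop :=
  ∀ (X : C) (α : (σ.E.obj (op P)).obj X), α = 0

/-- `I` is injective: `E(X, I) = 0` for all `X`. -/
def Injective (σ : Extriangulated k C) (I : C) : Prop :=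
  ∀ (X : C) (α : (σ.E.obj (op X)).obj I), α = 0

/-- `C` has enough projectives: every `X` admits a conflation `K → P → X` with `P`
projective. -/
def EnoughProjectives (σ : Extriangulated k C) : Prop :=
  ∀ X : C, ∃ (K P : C) (f : K ⟶ P) (g : P ⟶ X),
    σ.Conflation f g ∧ σ.Projective P

/-- `C` has enough injectives: every `X` admits a conflation `X → I → K` with `I`
injective. -/
def EnoughInjectives (σ : Extriangulated k C) : Prop :=
  ∀ X : C, ∃ (I K : C) (f : X ⟶ I) (g : I ⟶ K),
    σ.Conflation f g ∧ σ.Injective I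

/-- Frobenius: enough projectives and injectives, and the two classes coincide. -/
def Frobenius (σ : Extriangulated k C) : Prop :=
  σ.EnoughProjectives ∧ σ.EnoughInjectives ∧ ∀ X : C, (σ.Projective X ↔ σ.Injective X)

/-- `T` is rigid: `E(T, T) = 0`. -/
def Rigid (σ : Extriangulated k C) (T : C) : Prop :=
  ∀ α : (σ.E.obj (op T)).obj T, α = 0

/-- `σ` is extriangulated 2-Calabi–Yau: there is a bifunctorial duality
`E(X,Y) ≅ E(Y,X)^*`. -/
def CY2 (σ : Extriangulated k C) : Prop :=
  ∃ e : ∀ X Y : C,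
      ((σ.E.obj (op X)).obj Y) ≃ₗ[k] Module.Dual k ((σ.E.obj (op Y)).obj X),
    (∀ (X X' Y : C) (f : X' ⟶ X) (β : (σ.E.obj (op X)).obj Y)
        (γ : (σ.E.obj (op Y)).obj X'),
      e X' Y (((σ.E.map f.op).app Y) β) γ = e X Y β (((σ.E.obj (op Y)).map f) γ)) ∧
    (∀ (X Y Y' : C) (g : Y' ⟶ Y) (β : (σ.E.obj (op X)).obj Y')
        (γ : (σ.E.obj (op Y)).obj X),
      e X Y (((σ.E.obj (op X)).map g) β) γ = e X Y' β (((σ.E.map g.op).app X) γ))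

end Extriangulated

/-- `X` is in the additive closure of `T`: a retract of a finite direct sum of copies
of `T`. -/
def InAdd {C : Type u} [Category.{v} C] [Preadditive C] [HasFiniteBiproducts C]
    (T X : C) : Prop :=
  ∃ (n : ℕ) (s : X ⟶ ⨁ (fun _ : Fin n => T)) (r : (⨁ fun _ : Fin n => T) ⟶ X),
    s ≫ r = 𝟙 X

/-- `X` is indecomposable. -/
def Indecomposable {C : Type u} [Category.{v} C] [Preadditive C] [HasFiniteBiproducts C]
    (X : C) : Prop :=
  letI := hasBinaryBiproducts_of_finite_biproducts C
  ¬ IsZero X ∧ ∀ Y Z : C, Nonempty (X ≅ Y ⊞ Z) → IsZero Y ∨ IsZero Z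

/-- `T` is basic: it decomposes into finitely many pairwise non-isomorphic
indecomposable direct summands. -/
def Basic {C : Type u} [Category.{v} C] [Preadditive C] [HasFiniteBiproducts C]
    (T : C) : Prop :=
  ∃ (n : ℕ) (M : Fin n → C), (∀ i, Indecomposable (M i)) ∧
    (∀ i j, i ≠ j → IsEmpty (M i ≅ M j)) ∧ Nonempty (T ≅ ⨁ M)

/-- `T` is a cluster tilting object. -/
def ClusterTilting {C : Type u} [Category.{v} C] [Preadditive C]
    [CategoryTheory.Linear k C] [HasFiniteBiproducts C]
    (σ : Extriangulated k C) (T : C) : Prop :=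
  Basic T ∧ σ.Rigid T ∧
    ∀ X : C, ∃ (T₁ T₀ : C) (f : T₁ ⟶ T₀) (g : T₀ ⟶ X),
      σ.Conflation f g ∧ InAdd T T₁ ∧ InAdd T T₀

/-!
Every object `X` has an `add T`-resolution `T₁ → T₀ → X` (cluster tilting) and, since by
2-Calabi–Yau duality `𝔼(I, T₁) ≅ 𝔼(T₁, I)^* = 0` for `I` injective, every injective lies in
`add T` and `X` has a coresolution `X → I → K` with `I` injective in `add T`. Bijectivity of `τ`
on `End(T)` spreads to `Hom` between objects of `add T`; from there the four lemma, applied to the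
long exact `Hom`–`𝔼` sequences of these conflations and of their images under `τ` (in which `𝔼'`
vanishes on `add T'`, `T'` being rigid), gives bijectivity of `τ` on `𝔼(Z, Q)` and
`Hom(X, Q)` for `Q ∈ add T`, then on `Hom(X, Y)` through a resolution of `Y`, and finally on
`𝔼(X, Y)` through a coresolution of `Y`.
-/

open ZeroObject

universe v' u' w'

variable {k}

theorem CategoryTheory.Functor.additive_of_isZero_of_jointly_injective {D : Type*} [Category D]
    [Preadditive D] [HasBinaryBiproducts D] [HasZeroObject D] (F : D ⥤ ModuleCat k)
    (h0 : IsZero (F.obj 0))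
    (hinj : ∀ (X Y : D) (x : F.obj (X ⊞ Y)),
      F.map biprod.fst x = 0 → F.map biprod.snd x = 0 → x = 0) : F.Additive := by
  have := Functor.preservesZeroMorphisms_of_map_zero_object h0.isoZero
  have (X Y : D) : Mono (F.biprodComparison X Y) := by
    rw [ModuleCat.mono_iff_injective, injective_iff_map_eq_zero]
    intro x hx
    apply hinj X Y x
    · simpa [← ConcreteCategory.comp_apply] using congr((biprod.fst : _ ⟶ F.obj X) $hx)
    · simpa [← ConcreteCategory.comp_apply] using congr((biprod.snd : _ ⟶ F.obj Y) $hx)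
  have : PreservesBinaryBiproducts F :=
    ⟨fun {X Y} => preservesBinaryBiproduct_of_mono_biprodComparison F⟩
  exact F.additive_of_preservesBinaryBiproducts

theorem CategoryTheory.Functor.isZero_obj_of_sum_eq_id {D A : Type*} [Category D] [Preadditive D]
    [Category A] [Preadditive A] (F : D ⥤ A) [F.Additive] {T M : D} {n : ℕ}
    (p : Fin n → (M ⟶ T)) (j : Fin n → (T ⟶ M)) (h : ∑ i, p i ≫ j i = 𝟙 M)
    (hT : IsZero (F.obj T)) : IsZero (F.obj M) := by
  rw [IsZero.iff_id_eq_zero, ← F.map_id, ← h, F.map_sum]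
  simp [hT.eq_of_tgt (F.map (p _)) 0]

theorem CategoryTheory.Preadditive.sum_sum_comp_eq_of_sum_eq_id {D : Type*} [Category D]
    [Preadditive D] {T P Q : D} {m n : ℕ}
    {p : Fin m → (P ⟶ T)} {j : Fin m → (T ⟶ P)} (hP : ∑ i, p i ≫ j i = 𝟙 P)
    {q : Fin n → (Q ⟶ T)} {l : Fin n → (T ⟶ Q)} (hQ : ∑ i, q i ≫ l i = 𝟙 Q) (u : P ⟶ Q) :
    ∑ i, ∑ i', p i ≫ (j i ≫ u ≫ q i') ≫ l i' = u := by
  conv_rhs => rw [← Category.id_comp u, ← Category.comp_id u, ← hP, ← hQ]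
  simp only [Preadditive.sum_comp, Preadditive.comp_sum, Category.assoc]
  exact Finset.sum_comm

theorem CategoryTheory.Functor.rightComp_map_comp_mapAddHom {D D' : Type*} [Category D]
    [Preadditive D] [Category D'] [Preadditive D'] (τ : D ⥤ D') [τ.Additive] (W : D) {B Z : D}
    (g : B ⟶ Z) :
    (Preadditive.rightComp (τ.obj W) (τ.map g)).comp τ.mapAddHom
      = τ.mapAddHom.comp (Preadditive.rightComp W g) := by
  ext h
  simp [Preadditive.rightComp]

theorem CategoryTheory.Functor.leftComp_map_comp_mapAddHom {D D' : Type*} [Category D]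
    [Preadditive D] [Category D'] [Preadditive D'] (τ : D ⥤ D') [τ.Additive] (Y : D) {A B : D}
    (f : A ⟶ B) :
    (Preadditive.leftComp (τ.obj Y) (τ.map f)).comp τ.mapAddHom
      = τ.mapAddHom.comp (Preadditive.leftComp Y f) := by
  ext h
  simp [Preadditive.leftComp]

section InAdd

variable {C : Type u} [Category.{v} C] [Preadditive C] [HasFiniteBiproducts C]

theorem inAdd_iff_exists_sum_eq_id {T X : C} :
    InAdd T X ↔ ∃ (n : ℕ) (p : Fin n → (X ⟶ T)) (j : Fin n → (T ⟶ X)), ∑ i, p i ≫ j i = 𝟙 X := by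
  constructor
  · rintro ⟨n, s, r, hsr⟩
    refine ⟨n, fun i => s ≫ biproduct.π (fun _ => T) i, fun i => biproduct.ι (fun _ => T) i ≫ r,
      ?_⟩
    calc ∑ i, (s ≫ biproduct.π (fun _ => T) i) ≫ biproduct.ι (fun _ => T) i ≫ r
        = s ≫ (∑ i, biproduct.π (fun _ => T) i ≫ biproduct.ι (fun _ => T) i) ≫ r := by
          simp only [Preadditive.comp_sum, Preadditive.sum_comp, Category.assoc]
      _ = 𝟙 X := by rw [biproduct.total, Category.id_comp, hsr]
  · rintro ⟨n, p, j, h⟩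
    exact ⟨n, biproduct.lift p, biproduct.desc j, by rw [biproduct.lift_desc, h]⟩

theorem InAdd.of_retract {T X M : C} (h : InAdd T M) (s : X ⟶ M) (r : M ⟶ X)
    (hsr : s ≫ r = 𝟙 X) : InAdd T X := by
  obtain ⟨n, s', r', h'⟩ := h
  exact ⟨n, s ≫ s', r' ≫ r, by simp [reassoc_of% h', hsr]⟩

theorem InAdd.map {C' : Type u'} [Category.{v'} C'] [Preadditive C'] [HasFiniteBiproducts C']
    (τ : C ⥤ C') [τ.Additive] {T : C} {T' : C'} (e : τ.obj T ≅ T') {X : C} (h : InAdd T X) :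
    InAdd T' (τ.obj X) := by
  obtain ⟨n, p, j, hpj⟩ := inAdd_iff_exists_sum_eq_id.mp h
  refine inAdd_iff_exists_sum_eq_id.mpr ⟨n, fun i => τ.map (p i) ≫ e.hom,
    fun i => e.inv ≫ τ.map (j i), ?_⟩
  simp only [Category.assoc, Iso.hom_inv_id_assoc, ← τ.map_comp, ← τ.map_sum, hpj, τ.map_id]

theorem CategoryTheory.Functor.map_bijective_of_inAdd {C' : Type u'} [Category.{v'} C']
    [Preadditive C'] (τ : C ⥤ C') [τ.Additive] {T P Q : C}
    (hT : Function.Bijective (τ.map : (T ⟶ T) → _)) (hP : InAdd T P) (hQ : InAdd T Q) :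
    Function.Bijective (τ.map : (P ⟶ Q) → _) := by
  obtain ⟨m, p, j, hpj⟩ := inAdd_iff_exists_sum_eq_id.mp hP
  obtain ⟨n, q, l, hql⟩ := inAdd_iff_exists_sum_eq_id.mp hQ
  have hpj' : ∑ i, τ.map (p i) ≫ τ.map (j i) = 𝟙 _ := by
    simp only [← τ.map_comp, ← τ.map_sum, hpj, τ.map_id]
  have hql' : ∑ i, τ.map (q i) ≫ τ.map (l i) = 𝟙 _ := by
    simp only [← τ.map_comp, ← τ.map_sum, hql, τ.map_id]
  refine ⟨fun u v huv => ?_, fun w => ?_⟩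
  · have huv : τ.map u = τ.map v := huv
    rw [← Preadditive.sum_sum_comp_eq_of_sum_eq_id hpj hql u,
      ← Preadditive.sum_sum_comp_eq_of_sum_eq_id hpj hql v]
    refine Finset.sum_congr rfl fun i _ => Finset.sum_congr rfl fun i' _ => ?_
    rw [hT.injective (a₁ := j i ≫ u ≫ q i') (a₂ := j i ≫ v ≫ q i') (by simp [huv])]
  · choose c hc using fun i i' => hT.surjective (τ.map (j i) ≫ w ≫ τ.map (q i'))
    refine ⟨∑ i, ∑ i', p i ≫ c i i' ≫ l i', ?_⟩
    simpa [hc] using Preadditive.sum_sum_comp_eq_of_sum_eq_id hpj' hql' w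

end InAdd

namespace Extriangulated

variable {C : Type u} [Category.{v} C] [Preadditive C] [CategoryTheory.Linear k C]
  (σ : Extriangulated k C)

theorem eq_zero_of_section {A B Z : C} {α : (σ.E.obj (op Z)).obj A} {f : A ⟶ B} {g : B ⟶ Z}
    (hα : σ.realizes α f g) (s : Z ⟶ B) (hs : s ≫ g = 𝟙 Z) : α = 0 := by
  simpa [hs] using σ.ex₂' α f g hα s

theorem eq_zero_of_isZero_left {O : C} (hO : IsZero O) {A : C} (γ : (σ.E.obj (op O)).obj A) :
    γ = 0 := by
  obtain ⟨B, f, g, hγ⟩ := σ.realize_exists γ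
  exact σ.eq_zero_of_section hγ 0 (hO.eq_of_src _ _)

theorem eq_zero_of_isZero_right {O : C} (hO : IsZero O) {Z : C} (γ : (σ.E.obj (op Z)).obj O) :
    γ = 0 := by
  obtain ⟨B, f, g, hγ⟩ := σ.realize_exists γ
  exact σ.split_zero γ f g hγ ⟨0, hO.eq_of_src _ _⟩

section Additivity

variable [HasFiniteBiproducts C]

attribute [local instance] hasBinaryBiproducts_of_finite_biproducts

instance (W : Cᵒᵖ) : (σ.E.obj W).Additive := by
  refine Functor.additive_of_isZero_of_jointly_injective _ ?_ fun X Y x h₁ h₂ => ?_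
  · rw [ModuleCat.isZero_iff_subsingleton]
    exact ⟨fun x y => (σ.eq_zero_of_isZero_right (isZero_zero C) x).trans
      (σ.eq_zero_of_isZero_right (isZero_zero C) y).symm⟩
  · obtain ⟨B, f, g, hx⟩ := σ.realize_exists x
    obtain ⟨r₁, hr₁⟩ := σ.ex₅ x f g hx biprod.fst h₁
    obtain ⟨r₂, hr₂⟩ := σ.ex₅ x f g hx biprod.snd h₂
    refine σ.split_zero x f g hx ⟨r₁ ≫ biprod.inl + r₂ ≫ biprod.inr, ?_⟩
    simp [reassoc_of% hr₁, reassoc_of% hr₂]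

instance (M : C) : (σ.E.flip.obj M).Additive := by
  refine Functor.additive_of_isZero_of_jointly_injective _ ?_ fun X Y x h₁ h₂ => ?_
  · rw [ModuleCat.isZero_iff_subsingleton]
    exact ⟨fun x y => (σ.eq_zero_of_isZero_left (isZero_zero Cᵒᵖ).unop x).trans
      (σ.eq_zero_of_isZero_left (isZero_zero Cᵒᵖ).unop y).symm⟩
  · obtain ⟨B, f, g, hx⟩ := σ.realize_exists (Z := unop (X ⊞ Y)) x
    obtain ⟨s₁, hs₁⟩ := σ.ex₂ x f g hx (biprod.fst : X ⊞ Y ⟶ X).unop h₁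
    obtain ⟨s₂, hs₂⟩ := σ.ex₂ x f g hx (biprod.snd : X ⊞ Y ⟶ Y).unop h₂
    refine σ.eq_zero_of_section hx (biprod.inl.unop ≫ s₁ + biprod.inr.unop ≫ s₂) ?_
    simp [hs₁, hs₂, ← unop_comp, ← unop_add]

@[simp]
theorem map_add_app {X Y : Cᵒᵖ} (f g : X ⟶ Y) (M : C) :
    (σ.E.map (f + g)).app M = (σ.E.map f).app M + (σ.E.map g).app M :=
  (σ.E.flip.obj M).map_add

variable {σ} in
theorem Rigid.eq_zero_of_inAdd {T P Q : C} (hT : σ.Rigid T) (hP : InAdd T P) (hQ : InAdd T Q)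
    (δ : (σ.E.obj (op P)).obj Q) : δ = 0 := by
  obtain ⟨m, p, j, hpj⟩ := inAdd_iff_exists_sum_eq_id.mp hP
  obtain ⟨n, q, l, hql⟩ := inAdd_iff_exists_sum_eq_id.mp hQ
  have hPT : IsZero ((σ.E.flip.obj T).obj (op P)) :=
    (σ.E.flip.obj T).isZero_obj_of_sum_eq_id (fun i => (j i).op) (fun i => (p i).op)
      (by simp [← op_comp, ← op_sum, hpj])
      (ModuleCat.isZero_iff_subsingleton.mpr ⟨fun x y => (hT x).trans (hT y).symm⟩)
  have hPQ := (σ.E.obj (op P)).isZero_obj_of_sum_eq_id q l hql hPT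
  exact (ModuleCat.isZero_iff_subsingleton.mp hPQ).elim δ 0

/-- The connecting map `h ↦ h^* α` of the long exact sequence `C(W, -) → 𝔼(W, -)` of the
conflation realizing `α`. -/
def pullbackAddHom {A Z : C} (α : (σ.E.obj (op Z)).obj A) (W : C) :
    (W ⟶ Z) →+ (σ.E.obj (op W)).obj A :=
  AddMonoidHom.mk' (fun h => (σ.E.map h.op).app A α) fun h h' => by simp

/-- The connecting map `h ↦ h_* α` of the long exact sequence `C(-, Y) → 𝔼(-, Y)` of the
conflation realizing `α`. -/
def pushforwardAddHom {A Z : C} (α : (σ.E.obj (op Z)).obj A) (Y : C) :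
    (A ⟶ Y) →+ (σ.E.obj (op Z)).obj Y :=
  AddMonoidHom.mk' (fun h => (σ.E.obj (op Z)).map h α) fun h h' => by simp

end Additivity

section LongExactSequences

variable {σ} {A B Z : C} {α : (σ.E.obj (op Z)).obj A} {f : A ⟶ B} {g : B ⟶ Z}

theorem exact_rightComp_rightComp (hα : σ.realizes α f g) (W : C) :
    Function.Exact (Preadditive.rightComp W f) (Preadditive.rightComp W g) := fun h =>
  ⟨fun hh => σ.ex₁ α f g hα h hh, by
    rintro ⟨h', rfl⟩
    simp [Preadditive.rightComp, σ.comp_zero α f g hα]⟩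

theorem exact_leftComp_leftComp (hα : σ.realizes α f g) (Y : C) :
    Function.Exact (Preadditive.leftComp Y g) (Preadditive.leftComp Y f) := fun h =>
  ⟨fun hh => σ.ex₄ α f g hα h hh, by
    rintro ⟨h', rfl⟩
    simp [Preadditive.leftComp, reassoc_of% σ.comp_zero α f g hα]⟩

variable [HasFiniteBiproducts C]

theorem exact_rightComp_pullbackAddHom (hα : σ.realizes α f g) (W : C) :
    Function.Exact (Preadditive.rightComp W g) (σ.pullbackAddHom α W) := fun h =>
  ⟨fun hh => σ.ex₂ α f g hα h hh, by
    rintro ⟨h', rfl⟩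
    exact σ.ex₂' α f g hα h'⟩

theorem exact_pullbackAddHom_map (hα : σ.realizes α f g) (W : C) :
    Function.Exact (σ.pullbackAddHom α W) ((σ.E.obj (op W)).map f).hom := fun γ =>
  ⟨fun hγ => σ.ex₃ α f g hα γ hγ, by
    rintro ⟨h, rfl⟩
    exact σ.ex₃' α f g hα h⟩

theorem exact_leftComp_pushforwardAddHom (hα : σ.realizes α f g) (Y : C) :
    Function.Exact (Preadditive.leftComp Y f) (σ.pushforwardAddHom α Y) := fun h =>
  ⟨fun hh => σ.ex₅ α f g hα h hh, by
    rintro ⟨h', rfl⟩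
    exact σ.ex₅' α f g hα h'⟩

theorem exact_pushforwardAddHom_map (hα : σ.realizes α f g) (Y : C) :
    Function.Exact (σ.pushforwardAddHom α Y) ((σ.E.map g.op).app Y).hom := fun γ =>
  ⟨fun hγ => σ.ex₆ α f g hα γ hγ, by
    rintro ⟨h, rfl⟩
    exact σ.ex₆' α f g hα h⟩

end LongExactSequences

section ClusterTilting

variable [HasFiniteBiproducts C]

def HasAddResolutions (T : C) : Prop :=
  ∀ X : C, ∃ (T₁ T₀ : C) (f : T₁ ⟶ T₀) (g : T₀ ⟶ X),
    σ.Conflation f g ∧ InAdd T T₁ ∧ InAdd T T₀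

variable {σ}

theorem inAdd_of_injective (hCY : σ.CY2) {T : C} (hres : σ.HasAddResolutions T) {I : C}
    (hI : σ.Injective I) : InAdd T I := by
  obtain ⟨T₁, T₀, f, g, ⟨α, hα⟩, -, hT₀⟩ := hres I
  obtain ⟨e, -, -⟩ := hCY
  have hα0 : α = 0 := (e I T₁).injective (by ext x; simp [hI T₁ x])
  obtain ⟨-, s, hs⟩ := σ.realizes_zero f g (hα0 ▸ hα)
  exact hT₀.of_retract s g hs

theorem exists_conflation_injective_inAdd (hinj : σ.EnoughInjectives) (hCY : σ.CY2) {T : C}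
    (hres : σ.HasAddResolutions T) (X : C) :
    ∃ (I K : C) (i : X ⟶ I) (p : I ⟶ K), σ.Conflation i p ∧ σ.Injective I ∧ InAdd T I := by
  obtain ⟨I, K, i, p, hip, hI⟩ := hinj X
  exact ⟨I, K, i, p, hip, hI, inAdd_of_injective hCY hres hI⟩

end ClusterTilting

end Extriangulated

/-- The data `Γ` making `τ` an extriangulated functor `(τ, Γ)`. -/
structure ExtriangulatedFunctor {C : Type u} [Category.{v} C] [Preadditive C]
    [CategoryTheory.Linear k C] {C' : Type u'} [Category.{v'} C'] [Preadditive C']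
    [CategoryTheory.Linear k C'] (σ : Extriangulated.{v, u, w} k C)
    (σ' : Extriangulated.{v', u', w'} k C') (τ : C ⥤ C') where
  mapExt : ∀ X Y : C, (σ.E.obj (op X)).obj Y →ₗ[k] (σ'.E.obj (op (τ.obj X))).obj (τ.obj Y)
  mapExt_map_left : ∀ {X X' Y : C} (f : X' ⟶ X) (α : (σ.E.obj (op X)).obj Y),
    mapExt X' Y ((σ.E.map f.op).app Y α) = (σ'.E.map (τ.map f).op).app (τ.obj Y) (mapExt X Y α)
  mapExt_map_right : ∀ {X Y Y' : C} (g : Y ⟶ Y') (α : (σ.E.obj (op X)).obj Y),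
    mapExt X Y' ((σ.E.obj (op X)).map g α)
      = (σ'.E.obj (op (τ.obj X))).map (τ.map g) (mapExt X Y α)
  realizes_map : ∀ {A Z B : C} {α : (σ.E.obj (op Z)).obj A} {f : A ⟶ B} {g : B ⟶ Z},
    σ.realizes α f g → σ'.realizes (mapExt Z A α) (τ.map f) (τ.map g)

namespace ExtriangulatedFunctor

variable {C : Type u} [Category.{v} C] [Preadditive C] [CategoryTheory.Linear k C]
  {C' : Type u'} [Category.{v'} C'] [Preadditive C'] [CategoryTheory.Linear k C']
  {σ : Extriangulated.{v, u, w} k C} {σ' : Extriangulated.{v', u', w'} k C'}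
  {τ : C ⥤ C'} (F : ExtriangulatedFunctor σ σ' τ) {A B Z : C}

theorem map_comp_mapExt (W : C) (f : A ⟶ B) :
    ((σ'.E.obj (op (τ.obj W))).map (τ.map f)).hom.toAddMonoidHom.comp
        (F.mapExt W A).toAddMonoidHom
      = (F.mapExt W B).toAddMonoidHom.comp ((σ.E.obj (op W)).map f).hom.toAddMonoidHom := by
  ext γ
  simp [F.mapExt_map_right]

theorem map_op_comp_mapExt (Y : C) (g : B ⟶ Z) :
    ((σ'.E.map (τ.map g).op).app (τ.obj Y)).hom.toAddMonoidHom.comp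
        (F.mapExt Z Y).toAddMonoidHom
      = (F.mapExt B Y).toAddMonoidHom.comp ((σ.E.map g.op).app Y).hom.toAddMonoidHom := by
  ext γ
  simp [F.mapExt_map_left]

section Surjectivity

variable {α : (σ.E.obj (op Z)).obj A} {f : A ⟶ B} {g : B ⟶ Z}

theorem mapExt_surjective_of_conflation_left (hα : σ.realizes α f g) (W : C)
    (hZ : Function.Surjective (τ.map : (W ⟶ Z) → _))
    (hB : ∀ γ : (σ'.E.obj (op (τ.obj W))).obj (τ.obj B), γ = 0) :
    Function.Surjective (F.mapExt W A) := by
  intro γ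
  obtain ⟨h', hh'⟩ := σ'.ex₃ _ _ _ (F.realizes_map hα) γ (hB _)
  obtain ⟨h, rfl⟩ := hZ h'
  exact ⟨(σ.E.map h.op).app A α, by rw [F.mapExt_map_left, hh']⟩

theorem mapExt_surjective_of_conflation_right (hα : σ.realizes α f g) (Y : C)
    (hA : Function.Surjective (τ.map : (A ⟶ Y) → _))
    (hB : ∀ γ : (σ'.E.obj (op (τ.obj B))).obj (τ.obj Y), γ = 0) :
    Function.Surjective (F.mapExt Z Y) := by
  intro γ
  obtain ⟨h', hh'⟩ := σ'.ex₆ _ _ _ (F.realizes_map hα) γ (hB _)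
  obtain ⟨h, rfl⟩ := hA h'
  exact ⟨(σ.E.obj (op Z)).map h α, by rw [F.mapExt_map_right, hh']⟩

end Surjectivity

variable [HasFiniteBiproducts C] [HasFiniteBiproducts C'] [τ.Additive]

theorem pullbackAddHom_comp_mapAddHom (α : (σ.E.obj (op Z)).obj A) (W : C) :
    (σ'.pullbackAddHom (F.mapExt Z A α) (τ.obj W)).comp τ.mapAddHom
      = (F.mapExt W A).toAddMonoidHom.comp (σ.pullbackAddHom α W) := by
  ext h
  simp [Extriangulated.pullbackAddHom, F.mapExt_map_left]

theorem pushforwardAddHom_comp_mapAddHom (α : (σ.E.obj (op Z)).obj A) (Y : C) :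
    (σ'.pushforwardAddHom (F.mapExt Z A α) (τ.obj Y)).comp τ.mapAddHom
      = (F.mapExt Z Y).toAddMonoidHom.comp (σ.pushforwardAddHom α Y) := by
  ext h
  simp [Extriangulated.pushforwardAddHom, F.mapExt_map_right]

section FourLemma

variable {α : (σ.E.obj (op Z)).obj A} {f : A ⟶ B} {g : B ⟶ Z}

theorem map_surjective_of_conflation_right (hα : σ.realizes α f g) (W : C)
    (hB : Function.Surjective (τ.map : (W ⟶ B) → _))
    (hA : Function.Surjective (F.mapExt W A)) (hB' : Function.Injective (F.mapExt W B)) :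
    Function.Surjective (τ.map : (W ⟶ Z) → _) :=
  AddMonoidHom.surjective_of_surjective_of_surjective_of_injective
    (hc₁ := τ.rightComp_map_comp_mapAddHom W g) (hc₂ := F.pullbackAddHom_comp_mapAddHom α W)
    (hc₃ := F.map_comp_mapExt W f) (hf₂ := Extriangulated.exact_pullbackAddHom_map hα W)
    (hg₁ := Extriangulated.exact_rightComp_pullbackAddHom (F.realizes_map hα) (τ.obj W))
    (hg₂ := Extriangulated.exact_pullbackAddHom_map (F.realizes_map hα) (τ.obj W))
    (hi₁ := hB) (hi₃ := hA) (hi₄ := hB')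

theorem map_injective_of_conflation_right (hα : σ.realizes α f g) (W : C)
    (hA : Function.Surjective (τ.map : (W ⟶ A) → _))
    (hB : Function.Injective (τ.map : (W ⟶ B) → _)) (hA' : Function.Injective (F.mapExt W A)) :
    Function.Injective (τ.map : (W ⟶ Z) → _) :=
  AddMonoidHom.injective_of_surjective_of_injective_of_injective
    (hc₁ := τ.rightComp_map_comp_mapAddHom W f) (hc₂ := τ.rightComp_map_comp_mapAddHom W g)
    (hc₃ := F.pullbackAddHom_comp_mapAddHom α W)
    (hf₁ := Extriangulated.exact_rightComp_rightComp hα W)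
    (hf₂ := Extriangulated.exact_rightComp_pullbackAddHom hα W)
    (hg₁ := Extriangulated.exact_rightComp_rightComp (F.realizes_map hα) (τ.obj W))
    (hi₁ := hA) (hi₂ := hB) (hi₄ := hA')

theorem mapExt_injective_of_conflation_left (hα : σ.realizes α f g) (W : C)
    (hB : Function.Surjective (τ.map : (W ⟶ B) → _))
    (hZ : Function.Injective (τ.map : (W ⟶ Z) → _)) (hB' : Function.Injective (F.mapExt W B)) :
    Function.Injective (F.mapExt W A) :=
  AddMonoidHom.injective_of_surjective_of_injective_of_injective
    (hc₁ := τ.rightComp_map_comp_mapAddHom W g) (hc₂ := F.pullbackAddHom_comp_mapAddHom α W)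
    (hc₃ := F.map_comp_mapExt W f)
    (hf₁ := Extriangulated.exact_rightComp_pullbackAddHom hα W)
    (hf₂ := Extriangulated.exact_pullbackAddHom_map hα W)
    (hg₁ := Extriangulated.exact_rightComp_pullbackAddHom (F.realizes_map hα) (τ.obj W))
    (hi₁ := hB) (hi₂ := hZ) (hi₄ := hB')

theorem map_surjective_of_conflation_left (hα : σ.realizes α f g) (Y : C)
    (hB : Function.Surjective (τ.map : (B ⟶ Y) → _))
    (hZ : Function.Surjective (F.mapExt Z Y)) (hB' : Function.Injective (F.mapExt B Y)) :
    Function.Surjective (τ.map : (A ⟶ Y) → _) :=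
  AddMonoidHom.surjective_of_surjective_of_surjective_of_injective
    (hc₁ := τ.leftComp_map_comp_mapAddHom Y f) (hc₂ := F.pushforwardAddHom_comp_mapAddHom α Y)
    (hc₃ := F.map_op_comp_mapExt Y g) (hf₂ := Extriangulated.exact_pushforwardAddHom_map hα Y)
    (hg₁ := Extriangulated.exact_leftComp_pushforwardAddHom (F.realizes_map hα) (τ.obj Y))
    (hg₂ := Extriangulated.exact_pushforwardAddHom_map (F.realizes_map hα) (τ.obj Y))
    (hi₁ := hB) (hi₃ := hZ) (hi₄ := hB')

theorem map_injective_of_conflation_left (hα : σ.realizes α f g) (Y : C)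
    (hZ : Function.Surjective (τ.map : (Z ⟶ Y) → _))
    (hB : Function.Injective (τ.map : (B ⟶ Y) → _)) (hZ' : Function.Injective (F.mapExt Z Y)) :
    Function.Injective (τ.map : (A ⟶ Y) → _) :=
  AddMonoidHom.injective_of_surjective_of_injective_of_injective
    (hc₁ := τ.leftComp_map_comp_mapAddHom Y g) (hc₂ := τ.leftComp_map_comp_mapAddHom Y f)
    (hc₃ := F.pushforwardAddHom_comp_mapAddHom α Y)
    (hf₁ := Extriangulated.exact_leftComp_leftComp hα Y)
    (hf₂ := Extriangulated.exact_leftComp_pushforwardAddHom hα Y)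
    (hg₁ := Extriangulated.exact_leftComp_leftComp (F.realizes_map hα) (τ.obj Y))
    (hi₁ := hZ) (hi₂ := hB) (hi₄ := hZ')

theorem mapExt_injective_of_conflation_right (hα : σ.realizes α f g) (Y : C)
    (hB : Function.Surjective (τ.map : (B ⟶ Y) → _))
    (hA : Function.Injective (τ.map : (A ⟶ Y) → _)) (hB' : Function.Injective (F.mapExt B Y)) :
    Function.Injective (F.mapExt Z Y) :=
  AddMonoidHom.injective_of_surjective_of_injective_of_injective
    (hc₁ := τ.leftComp_map_comp_mapAddHom Y f) (hc₂ := F.pushforwardAddHom_comp_mapAddHom α Y)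
    (hc₃ := F.map_op_comp_mapExt Y g)
    (hf₁ := Extriangulated.exact_leftComp_pushforwardAddHom hα Y)
    (hf₂ := Extriangulated.exact_pushforwardAddHom_map hα Y)
    (hg₁ := Extriangulated.exact_leftComp_pushforwardAddHom (F.realizes_map hα) (τ.obj Y))
    (hi₁ := hB) (hi₂ := hA) (hi₄ := hB')

end FourLemma

variable {T : C}

theorem mapExt_bijective_of_inAdd (hT : σ.Rigid T) (hres : σ.HasAddResolutions T) {T' : C'}
    (hT' : σ'.Rigid T') (e : τ.obj T ≅ T')
    (hadd : ∀ {P Q : C}, InAdd T P → InAdd T Q → Function.Bijective (τ.map : (P ⟶ Q) → _))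
    (Z : C) {Q : C} (hQ : InAdd T Q) : Function.Bijective (F.mapExt Z Q) := by
  obtain ⟨T₁, T₀, f, g, ⟨α, hα⟩, hT₁, hT₀⟩ := hres Z
  refine ⟨F.mapExt_injective_of_conflation_right hα Q (hadd hT₀ hQ).surjective
    (hadd hT₁ hQ).injective fun x y _ => ?_,
    F.mapExt_surjective_of_conflation_right hα Q (hadd hT₁ hQ).surjective
      (hT'.eq_zero_of_inAdd (hT₀.map τ e) (hQ.map τ e))⟩
  rw [hT.eq_zero_of_inAdd hT₀ hQ x, hT.eq_zero_of_inAdd hT₀ hQ y]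

theorem map_bijective_of_inAdd_right (hT : σ.Rigid T)
    (hcores : ∀ X : C, ∃ (I K : C) (i : X ⟶ I) (p : I ⟶ K), σ.Conflation i p ∧ InAdd T I)
    (hadd : ∀ {P Q : C}, InAdd T P → InAdd T Q → Function.Bijective (τ.map : (P ⟶ Q) → _))
    (hE : ∀ (Z : C) {Q : C}, InAdd T Q → Function.Bijective (F.mapExt Z Q))
    (X : C) {Q : C} (hQ : InAdd T Q) : Function.Bijective (τ.map : (X ⟶ Q) → _) := by
  have surj (X : C) : Function.Surjective (τ.map : (X ⟶ Q) → _) := by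
    obtain ⟨I, K, i, p, ⟨ω, hω⟩, hI⟩ := hcores X
    refine F.map_surjective_of_conflation_left hω Q (hadd hI hQ).surjective (hE K hQ).surjective
      fun x y _ => ?_
    rw [hT.eq_zero_of_inAdd hI hQ x, hT.eq_zero_of_inAdd hI hQ y]
  obtain ⟨I, K, i, p, ⟨ω, hω⟩, hI⟩ := hcores X
  exact ⟨F.map_injective_of_conflation_left hω Q (surj K) (hadd hI hQ).injective
    (hE K hQ).injective, surj X⟩

theorem map_bijective (hres : σ.HasAddResolutions T)
    (hE : ∀ (Z : C) {Q : C}, InAdd T Q → Function.Bijective (F.mapExt Z Q))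
    (hHom : ∀ (X : C) {Q : C}, InAdd T Q → Function.Bijective (τ.map : (X ⟶ Q) → _))
    (X Y : C) : Function.Bijective (τ.map : (X ⟶ Y) → _) := by
  obtain ⟨S₁, S₀, f, g, ⟨β, hβ⟩, hS₁, hS₀⟩ := hres Y
  exact ⟨F.map_injective_of_conflation_right hβ X (hHom X hS₁).surjective
      (hHom X hS₀).injective (hE X hS₁).injective,
    F.map_surjective_of_conflation_right hβ X (hHom X hS₀).surjective (hE X hS₁).surjective
      (hE X hS₀).injective⟩

theorem mapExt_bijective
    (hcores : ∀ X : C, ∃ (I K : C) (i : X ⟶ I) (p : I ⟶ K),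
      σ.Conflation i p ∧ σ.Injective I ∧ InAdd T I)
    (hE : ∀ (Z : C) {Q : C}, InAdd T Q → Function.Bijective (F.mapExt Z Q))
    (hHom : ∀ X Y : C, Function.Bijective (τ.map : (X ⟶ Y) → _)) (X Y : C) :
    Function.Bijective (F.mapExt X Y) := by
  obtain ⟨I, K, i, p, ⟨ω, hω⟩, hI, hIT⟩ := hcores Y
  have hτI (γ : (σ'.E.obj (op (τ.obj X))).obj (τ.obj I)) : γ = 0 := by
    obtain ⟨γ₀, rfl⟩ := (hE X hIT).surjective γ
    rw [hI X γ₀, map_zero]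
  exact ⟨F.mapExt_injective_of_conflation_left hω X (hHom X I).surjective (hHom X K).injective
      fun x y _ => by rw [hI X x, hI X y],
    F.mapExt_surjective_of_conflation_left hω X (hHom X K).surjective hτI⟩

end ExtriangulatedFunctor

namespace Stmt9

theorem extriangulated_equivalence
    {C : Type u} [Category.{v} C] [Preadditive C] [CategoryTheory.Linear k C]
    [HasFiniteBiproducts C]
    {C' : Type u} [Category.{v} C'] [Preadditive C'] [CategoryTheory.Linear k C']
    [HasFiniteBiproducts C']
    [∀ X Y : C, FiniteDimensional k (X ⟶ Y)]
    (σ : Extriangulated k C) (σ' : Extriangulated k C')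
    (τ : C ⥤ C') [τ.Additive] [τ.Linear k]
    -- the extriangulated structure of the functor τ : a natural transformation
    -- E(-,-) → E'(τ-, τ-) compatible with realizations
    (τE : ∀ X Y : C,
      ((σ.E.obj (op X)).obj Y) →ₗ[k] ((σ'.E.obj (op (τ.obj X))).obj (τ.obj Y)))
    (τE_natl : ∀ (X X' Y : C) (f : X' ⟶ X) (α : (σ.E.obj (op X)).obj Y),
      τE X' Y (((σ.E.map f.op).app Y) α)
        = ((σ'.E.map (τ.map f).op).app (τ.obj Y)) (τE X Y α))
    (τE_natr : ∀ (X Y Y' : C) (g : Y ⟶ Y') (α : (σ.E.obj (op X)).obj Y),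
      τE X Y' (((σ.E.obj (op X)).map g) α)
        = ((σ'.E.obj (op (τ.obj X))).map (τ.map g)) (τE X Y α))
    (τ_realize : ∀ {A Z B : C} (α : (σ.E.obj (op Z)).obj A) (f : A ⟶ B) (g : B ⟶ Z),
      σ.realizes α f g → σ'.realizes (τE Z A α) (τ.map f) (τ.map g))
    -- hypotheses on C, T, T'
    (hFrob : σ.Frobenius) (hCY : σ.CY2)
    (T : C) (T' : C')
    (hT : ClusterTilting k σ T) (hT' : ClusterTilting k σ' T')
    (e : τ.obj T ≅ T')
    (hbij : Function.Bijective (fun f : T ⟶ T => e.inv ≫ τ.map f ≫ e.hom))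
    (hess : ∀ Y : C', ∃ X : C, Nonempty (τ.obj X ≅ Y)) :
    τ.Full ∧ τ.Faithful ∧ ∀ X Y : C, Function.Bijective (τE X Y) := by
  let F : ExtriangulatedFunctor σ σ' τ :=
    ⟨τE, τE_natl _ _ _, τE_natr _ _ _, fun hα => τ_realize _ _ _ hα⟩
  obtain ⟨-, hT, hres⟩ := hT
  have hEnd : Function.Bijective (τ.map : (T ⟶ T) → _) :=
    (Equiv.comp_bijective _ (e.homCongr e)).mp hbij
  have hadd {P Q : C} (hP : InAdd T P) (hQ : InAdd T Q) := τ.map_bijective_of_inAdd hEnd hP hQ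
  have hE := F.mapExt_bijective_of_inAdd hT hres hT'.2.1 e hadd
  have hcores := Extriangulated.exists_conflation_injective_inAdd hFrob.2.1 hCY hres
  have hHomAdd := F.map_bijective_of_inAdd_right hT
    (fun X => let ⟨I, K, i, p, hip, _, hI⟩ := hcores X; ⟨I, K, i, p, hip, hI⟩) hadd hE
  have hHom := F.map_bijective hres hE hHomAdd
  exact ⟨⟨(hHom _ _).surjective⟩, ⟨@fun X Y => (hHom X Y).injective⟩,
    F.mapExt_bijective hcores hE hHom⟩

end Stmt9
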